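/- Let S be a profinite semigroup which is a KR-cover. Then S^I, the profinite monoid obtained from S by adjoining an isolated identity element I (even if S is a monoid), is a KR-cover. -/

import Mathlib

set_option autoImplicit false

/-! ### General notions: topological semigroups, pseudovarieties, pro-V semigroups -/

/-- Continuity of a map into a type regarded with the discrete topology. -/
def ContinuousDisc {S : Type} [TopologicalSpace S] {T : Type} (f : S → T) : Prop :=
  @Continuous S T _ ⊥ f

/-- A pseudovariety of semigroups: a class of finite semigroups closed under
homomorphic images, subsemigroups and finite direct products. -/
structure Pseudovariety : Type 1 where
  Mem : ∀ (S : Type) [Semigroup S], Prop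
  finite : ∀ (S : Type) [Semigroup S], Mem S → Finite S
  closed_hom : ∀ (S T : Type) [Semigroup S] [Semigroup T] (f : S →ₙ* T),
    Mem S → Function.Surjective f → Mem T
  closed_sub : ∀ (S T : Type) [Semigroup S] [Semigroup T] (f : T →ₙ* S),
    Mem S → Function.Injective f → Mem T
  closed_prod : ∀ (ι : Type) [Finite ι] (S : ι → Type) [∀ i, Semigroup (S i)],
    (∀ i, Mem (S i)) → Mem (∀ i, S i)

/-- A bundled member of a pseudovariety `V` (a finite semigroup belonging to `V`),
always regarded as carrying the discrete topology. -/
structure SgrIn (V : Pseudovariety) : Type 1 where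
  carrier : Type
  [str : Semigroup carrier]
  mem : V.Mem carrier

attribute [instance] SgrIn.str

/-- A (bundled) topological semigroup. -/
structure TopSgr : Type 1 where
  carrier : Type
  [str : Semigroup carrier]
  [top : TopologicalSpace carrier]

attribute [instance] TopSgr.str TopSgr.top

/-- A finite semigroup regarded as a topological semigroup with the discrete topology. -/
def discTopSgr (S : Type) [Semigroup S] : TopSgr :=
  @TopSgr.mk S _ ⊥

/-- A pro-V semigroup: a compact Hausdorff topological semigroup that is residually `V`. -/
def IsProV (V : Pseudovariety) (S : TopSgr) : Prop :=
  CompactSpace S.carrier ∧ T2Space S.carrier ∧ ContinuousMul S.carrier ∧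
    ∀ x y : S.carrier, x ≠ y → ∃ (F : SgrIn V) (f : S.carrier →ₙ* F.carrier),
      ContinuousDisc ⇑f ∧ f x ≠ f y

/-- A profinite semigroup: a compact Hausdorff totally disconnected topological semigroup. -/
def IsProfiniteSgr (S : TopSgr) : Prop :=
  CompactSpace S.carrier ∧ T2Space S.carrier ∧ TotallyDisconnectedSpace S.carrier ∧
    ContinuousMul S.carrier

/-- `C`, together with the continuous homomorphisms `φ i`, is a `V`-coproduct of the
family `S` of pro-`V` semigroups. -/
structure IsCoproduct (V : Pseudovariety) {I : Type} (S : I → TopSgr)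
    (C : TopSgr) (φ : ∀ i, (S i).carrier →ₙ* C.carrier) : Prop where
  proV : IsProV V C
  cont : ∀ i, Continuous ⇑(φ i)
  universal : ∀ (T : TopSgr), IsProV V T →
    ∀ ψ : ∀ i, (S i).carrier →ₙ* T.carrier, (∀ i, Continuous ⇑(ψ i)) →
      ∃! Ψ : C.carrier →ₙ* T.carrier, Continuous ⇑Ψ ∧ ∀ i, Ψ.comp (φ i) = ψ i

/-- `P`, together with the homomorphisms `e i`, is a free product (coproduct in the
category of semigroups) of the family `S`. -/
structure IsFreeProduct {I : Type} (S : I → Type) [∀ i, Semigroup (S i)]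
    (P : Type) [Semigroup P] (e : ∀ i, S i →ₙ* P) : Prop where
  universal : ∀ (T : Type) [Semigroup T] (f : ∀ i, S i →ₙ* T),
    ∃! F : P →ₙ* T, ∀ i, F.comp (e i) = f i

/-! ### Particular pseudovarieties and related notions -/

/-- `V` contains the pseudovariety `Sl` of finite semilattices. -/
def ContainsSl (V : Pseudovariety) : Prop :=
  ∀ (S : Type) [Semigroup S] [Finite S],
    (∀ x y : S, x * y = y * x) → (∀ x : S, x * x = x) → V.Mem S

/-- Green's `J`-preorder: `s ≤_J t`, i.e. `s ∈ S^I t S^I`. -/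
def JBelow {S : Type} [Semigroup S] (s t : S) : Prop :=
  ∃ x y : WithOne S, x * (t : WithOne S) * y = (s : WithOne S)

/-- `V` contains the pseudovariety `J` of finite `J`-trivial semigroups. -/
def ContainsJ (V : Pseudovariety) : Prop :=
  ∀ (S : Type) [Semigroup S] [Finite S],
    (∀ s t : S, JBelow s t → JBelow t s → s = t) → V.Mem S

/-- The preimage of an idempotent under a semigroup homomorphism, as a subsemigroup. -/
def fiberSub {S T : Type} [Semigroup S] [Semigroup T] (ψ : S →ₙ* T) (e : T)
    (he : e * e = e) : Subsemigroup S where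
  carrier := ⇑ψ ⁻¹' {e}
  mul_mem' := by
    intro a b ha hb
    simp only [Set.mem_preimage, Set.mem_singleton_iff] at *
    rw [map_mul, ha, hb, he]

/-- The set of products of `n+1` elements of a semigroup (so `nthProds S 0 = S`). -/
def nthProds (S : Type) [Semigroup S] : ℕ → Set S
  | 0 => Set.univ
  | n + 1 => {x | ∃ a y, y ∈ nthProds S n ∧ x = a * y}

/-- A nilpotent semigroup: it has a zero `z` and some power of the semigroup is `{z}`. -/
def IsNilpotentSgr (S : Type) [Semigroup S] : Prop :=
  ∃ z : S, (∀ x : S, z * x = z ∧ x * z = z) ∧ ∃ n : ℕ, nthProds S n ⊆ {z}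

/-- A generator of the Mal'cev product `N ⓜ V`: a finite semigroup admitting a surjective
homomorphism onto a member of `V` all of whose idempotent fibers are nilpotent. -/
def NMalcevGen (V : Pseudovariety) (S : Type) [Semigroup S] : Prop :=
  Finite S ∧ ∃ (T : SgrIn V) (ψ : S →ₙ* T.carrier), Function.Surjective ψ ∧
    ∀ (e : T.carrier) (he : e * e = e), IsNilpotentSgr (fiberSub ψ e he)

/-- The equality `N ⓜ V = V`: `V` coincides with the smallest pseudovariety containing
all finite semigroups admitting an `N`-morphism onto some member of `V`. -/
def NMalcevFixed (V : Pseudovariety) : Prop :=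
  ∀ (S : Type) [Semigroup S] [Finite S],
    V.Mem S ↔ ∀ U : Pseudovariety,
      (∀ (S' : Type) [Semigroup S'], NMalcevGen V S' → U.Mem S') → U.Mem S

/-- A completely simple semigroup: simple with a primitive idempotent. -/
def IsCompletelySimple (S : Type) [Semigroup S] : Prop :=
  (∀ J : Set S, J.Nonempty → (∀ s x : S, x ∈ J → s * x ∈ J ∧ x * s ∈ J) → J = Set.univ) ∧
  ∃ e : S, e * e = e ∧ ∀ f : S, f * f = f → e * f = f → f * e = f → f = e

/-- An equidivisible semigroup. -/
def Equidivisible (S : Type) [Semigroup S] : Prop :=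
  ∀ u v x y : S, u * v = x * y →
    ∃ t : WithOne S,
      ((x : WithOne S) = (u : WithOne S) * t ∧ t * (y : WithOne S) = (v : WithOne S)) ∨
      ((x : WithOne S) * t = (u : WithOne S) ∧ (y : WithOne S) = t * (v : WithOne S))

/-! ### The two-sided Karnofsky–Rhodes expansion -/

/-- Vertices of the two-sided Cayley graph of `T`: pairs of elements of `T^I`. -/
abbrev KRVtx (T : Type) : Type := WithOne T × WithOne T

/-- Edges of the two-sided Cayley graph: (source, label, target). -/
abbrev KREdge (A T : Type) : Type := KRVtx T × A × KRVtx T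

/-- The image in `T^I` of a letter. -/
def letterImg {A T : Type} [Semigroup T] (ψ : FreeSemigroup A →ₙ* T) (a : A) : WithOne T :=
  (ψ (FreeSemigroup.of a) : WithOne T)

/-- The image in `T^I` of a (possibly empty) word. -/
def wordImg {A T : Type} [Semigroup T] (ψ : FreeSemigroup A →ₙ* T) (w : List A) : WithOne T :=
  (w.map (letterImg ψ)).prod

/-- `e` is an edge of the two-sided Cayley graph `Γ_ψ`. -/
def IsKREdge {A T : Type} [Semigroup T] (ψ : FreeSemigroup A →ₙ* T) (e : KREdge A T) : Prop :=
  e.1.1 * letterImg ψ e.2.1 = e.2.2.1 ∧ e.1.2 = letterImg ψ e.2.1 * e.2.2.2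

/-- One step along an edge of `Γ_ψ` (used to define directed paths). -/
def KRStep {A T : Type} [Semigroup T] (ψ : FreeSemigroup A →ₙ* T) (v w : KRVtx T) : Prop :=
  ∃ a : A, v.1 * letterImg ψ a = w.1 ∧ v.2 = letterImg ψ a * w.2

/-- A transition edge of `Γ_ψ`: an edge from whose target there is no directed path
back to its source. -/
def IsTransEdge {A T : Type} [Semigroup T] (ψ : FreeSemigroup A →ₙ* T) (e : KREdge A T) : Prop :=
  IsKREdge ψ e ∧ ¬ Relation.ReflTransGen (KRStep ψ) e.2.2 e.1

/-- The list of letters of an element of the free semigroup. -/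
def letters {A : Type} (u : FreeSemigroup A) : List A := u.head :: u.tail

/-- The set of edges of the path `p_u` of `Γ_ψ` from `(I, ψ u)` to `(ψ u, I)` labeled by `u`. -/
def pathEdges {A T : Type} [Semigroup T] (ψ : FreeSemigroup A →ₙ* T) (u : FreeSemigroup A) :
    Set (KREdge A T) :=
  {e | ∃ (w₁ w₂ : List A) (a : A), letters u = w₁ ++ a :: w₂ ∧
    e = ((wordImg ψ w₁, wordImg ψ (a :: w₂)), a, (wordImg ψ (w₁ ++ [a]), wordImg ψ w₂))}

/-- The set `T(p_u)` of transition edges of `Γ_ψ` occurring in the path `p_u`. -/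
def transEdges {A T : Type} [Semigroup T] (ψ : FreeSemigroup A →ₙ* T) (u : FreeSemigroup A) :
    Set (KREdge A T) :=
  {e ∈ pathEdges ψ u | IsTransEdge ψ e}

/-- A realization of the two-sided Karnofsky–Rhodes expansion of `ψ : A⁺ → T`:
a semigroup `K = T_ψ^KR` together with the projection `ψ^KR : A⁺ → K`, which is onto and
identifies `u` and `v` exactly when `ψ u = ψ v` and `T(p_u) = T(p_v)`, and the canonical
homomorphism `π : T_ψ^KR → T` with `π ∘ ψ^KR = ψ`. -/
structure KRExp {A T : Type} [Semigroup T] (ψ : FreeSemigroup A →ₙ* T) : Type 1 where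
  K : Type
  [strK : Semigroup K]
  [finK : Finite K]
  ψKR : FreeSemigroup A →ₙ* K
  π : K →ₙ* T
  surj : Function.Surjective ⇑ψKR
  ker : ∀ u v : FreeSemigroup A, ψKR u = ψKR v ↔
    (ψ u = ψ v ∧ transEdges ψ u = transEdges ψ v)
  proj : π.comp ψKR = ψ

attribute [instance] KRExp.strK KRExp.finK

/-- The data of a two-sided Karnofsky–Rhodes expansion of a finite semigroup `T`:
a finite alphabet `A`, an onto homomorphism `ψ : A⁺ → T`, and a realization `T_ψ^KR`. -/
structure KRData (T : Type) [Semigroup T] : Type 1 where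
  A : Type
  [finA : Finite A]
  ψ : FreeSemigroup A →ₙ* T
  surjψ : Function.Surjective ⇑ψ
  E : KRExp ψ

attribute [instance] KRData.finA

/-- `V` is closed under two-sided Karnofsky–Rhodes expansion. -/
def ClosedUnderKR (V : Pseudovariety) : Prop :=
  ∀ (A T : Type) [Finite A] [Semigroup T], V.Mem T →
    ∀ (ψ : FreeSemigroup A →ₙ* T), Function.Surjective ⇑ψ →
      ∀ E : KRExp ψ, V.Mem E.K

/-! ### KR-covers -/

/-- `S` is a KR-cover of the finite semigroup `T`. -/
def IsKRCoverOf (S : TopSgr) (T : Type) [Semigroup T] [Finite T] : Prop :=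
  (∃ φ : S.carrier →ₙ* T, ContinuousDisc ⇑φ ∧ Function.Surjective ⇑φ) ∧
  ∀ φ : S.carrier →ₙ* T, ContinuousDisc ⇑φ → Function.Surjective ⇑φ →
    ∃ (D : KRData T) (φψ : S.carrier →ₙ* D.E.K),
      ContinuousDisc ⇑φψ ∧ D.E.π.comp φψ = φ

/-- `S` is a KR-cover: a KR-cover of each of its finite continuous homomorphic images. -/
def IsKRCover (S : TopSgr) : Prop :=
  ∀ (T : Type) [Semigroup T] [Finite T],
    (∃ φ : S.carrier →ₙ* T, ContinuousDisc ⇑φ ∧ Function.Surjective ⇑φ) →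
    IsKRCoverOf S T

/-- `S` is `V`-projective. -/
def IsVProjective (V : Pseudovariety) (S : TopSgr) : Prop :=
  IsProV V S ∧ ∀ (T R : TopSgr), IsProV V T → IsProV V R →
    ∀ (f : S.carrier →ₙ* T.carrier) (g : R.carrier →ₙ* T.carrier),
      Continuous ⇑f → Continuous ⇑g → Function.Surjective ⇑g →
        ∃ f' : S.carrier →ₙ* R.carrier, Continuous ⇑f' ∧ g.comp f' = f

/-! ### Strong KR-covers and letter super-cancellativity -/

/-- `κ : A → S` is a generating mapping: its image generates a dense subsemigroup. -/
def GeneratingMap {A : Type} (S : TopSgr) (κ : A → S.carrier) : Prop :=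
  Dense (Subsemigroup.closure (Set.range κ) : Set S.carrier)

/-- The homomorphism `A⁺ → T` extending `a ↦ φ (κ a)`. -/
def liftGen {A : Type} (S : TopSgr) (κ : A → S.carrier) {T : Type} [Semigroup T]
    (φ : S.carrier →ₙ* T) : FreeSemigroup A →ₙ* T :=
  FreeSemigroup.lift (fun a => φ (κ a))

/-- `S` is a strong KR-cover of the finite semigroup `T` with respect to the
generating mapping `κ`. -/
def IsStrongKRCoverOfWrt {A : Type} (S : TopSgr) (κ : A → S.carrier)
    (T : Type) [Semigroup T] [Finite T] : Prop :=
  ∀ φ : S.carrier →ₙ* T, ContinuousDisc ⇑φ → Function.Surjective ⇑φ →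
    ∃ (E : KRExp (liftGen S κ φ)) (φκ : S.carrier →ₙ* E.K),
      ContinuousDisc ⇑φκ ∧ E.π.comp φκ = φ ∧
      ∀ a : A, φκ (κ a) = E.ψKR (FreeSemigroup.of a)

/-- `S` is a strong KR-cover of the finite semigroup `T` (with respect to some
generating mapping with finite domain). -/
def IsStrongKRCoverOf (S : TopSgr) (T : Type) [Semigroup T] [Finite T] : Prop :=
  ∃ A : Type, Finite A ∧ ∃ κ : A → S.carrier, GeneratingMap S κ ∧
    IsStrongKRCoverOfWrt S κ T

/-- `S` is a strong KR-cover: a strong KR-cover of each of its finite continuous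
homomorphic images. -/
def IsStrongKRCover (S : TopSgr) : Prop :=
  ∀ (T : Type) [Semigroup T] [Finite T],
    (∃ φ : S.carrier →ₙ* T, ContinuousDisc ⇑φ ∧ Function.Surjective ⇑φ) →
    IsStrongKRCoverOf S T

/-- `S` is letter super-cancellative with respect to the subset `A` of `S`. -/
def IsLSC (S : TopSgr) (A : Set S.carrier) : Prop :=
  ∀ a ∈ A, ∀ b ∈ A, ∀ u v : WithOne S.carrier,
    (u * (a : WithOne S.carrier) = v * (b : WithOne S.carrier) → a = b ∧ u = v) ∧
    ((a : WithOne S.carrier) * u = (b : WithOne S.carrier) * v → a = b ∧ u = v)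

/-! ### `S^I` and inverse limits -/

/-- The sum topology on `S^I = S ∪ {I}`: the point `I` is isolated and `S` keeps
its topology. -/
def withOneTopology (S : Type) [TopologicalSpace S] : TopologicalSpace (WithOne S) where
  IsOpen V := IsOpen ((fun s : S => (s : WithOne S)) ⁻¹' V)
  isOpen_univ := by simp
  isOpen_inter := by
    intro U V hU hV
    rw [Set.preimage_inter]
    exact hU.inter hV
  isOpen_sUnion := by
    intro s hs
    rw [Set.preimage_sUnion]
    exact isOpen_biUnion hs

/-- `S^I` as a topological semigroup (in fact a monoid): `S` with an isolated identity
adjoined. -/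
def withOneTopSgr (S : TopSgr) : TopSgr :=
  @TopSgr.mk (WithOne S.carrier) _ (withOneTopology S.carrier)

/-- The inverse limit of a family of topological semigroups, as a subsemigroup of
the product. -/
def invLimSub {I : Type} [Preorder I] (S : I → TopSgr)
    (f : ∀ i j, j ≤ i → ((S i).carrier →ₙ* (S j).carrier)) :
    Subsemigroup (∀ i, (S i).carrier) where
  carrier := {x | ∀ i j (h : j ≤ i), f i j h (x i) = x j}
  mul_mem' := by
    intro a b ha hb i j h
    simp only [Pi.mul_apply, map_mul, ha i j h, hb i j h]

/-- The inverse limit as a topological semigroup (with the topology induced from the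
product topology). -/
def invLimTopSgr {I : Type} [Preorder I] (S : I → TopSgr)
    (f : ∀ i j, j ≤ i → ((S i).carrier →ₙ* (S j).carrier)) : TopSgr :=
  TopSgr.mk (invLimSub S f)

/-! Restrict `φ : S^I → T` to `S`. Its image `T₀` is a finite continuous image of `S`, so the
restriction lifts to some expansion `T₀^KR` over an alphabet `A`. Over `A ⊕ {c}`, with `c ↦ φ(I)`
(an identity of `T`), a path-preserving relabelling cannot create transition edges, so
`T₀^KR` maps homomorphically into `T^KR`; and reading `c` between two nonempty words only adds a
loop to the path, so `γ = [c]` satisfies `p γ q = p q` in `T^KR`. Then `x ↦ γ x γ`, extended by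
`I ↦ γ γ`, is a homomorphism `(T₀^KR)^I → T^KR` over `T`, and composing it with the lift on `S`
gives the lift of `φ`. -/

open FreeSemigroup

theorem List.append_eq_append_cons_iff {α : Type} {l₁ l₂ w₁ w₂ : List α} {a : α} :
    l₁ ++ l₂ = w₁ ++ a :: w₂ ↔
      (∃ k, l₁ = w₁ ++ a :: k ∧ w₂ = k ++ l₂) ∨ ∃ k, w₁ = l₁ ++ k ∧ l₂ = k ++ a :: w₂ := by
  rw [List.append_eq_append_iff]
  constructor
  · rintro (⟨k, hw, hl⟩ | ⟨k, hl, hk⟩)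
    · exact Or.inr ⟨k, hw, hl⟩
    · rcases k with _ | ⟨b, k⟩
      · exact Or.inr ⟨[], by simpa using hl.symm, by simpa using hk.symm⟩
      · simp only [List.cons_append, List.cons.injEq] at hk
        obtain ⟨rfl, rfl⟩ := hk
        exact Or.inl ⟨k, hl, rfl⟩
  · rintro (⟨k, rfl, rfl⟩ | ⟨k, rfl, rfl⟩)
    · exact Or.inr ⟨a :: k, rfl, rfl⟩
    · exact Or.inl ⟨k, rfl, rfl⟩

instance WithOne.finite {X : Type} [Finite X] : Finite (WithOne X) :=
  inferInstanceAs (Finite (Option X))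

noncomputable def MulHom.liftOfSurjective {M N P : Type} [Mul M] [Mul N] [Mul P]
    (f : M →ₙ* N) (hf : Function.Surjective f) (g : M →ₙ* P)
    (hg : ∀ u v, f u = f v → g u = g v) : N →ₙ* P where
  toFun y := g (Function.surjInv hf y)
  map_mul' x y := by
    rw [← map_mul]
    exact hg _ _ (by simp only [map_mul, Function.surjInv_eq])

theorem MulHom.liftOfSurjective_apply {M N P : Type} [Mul M] [Mul N] [Mul P]
    {f : M →ₙ* N} {hf : Function.Surjective f} {g : M →ₙ* P}
    {hg : ∀ u v, f u = f v → g u = g v} (u : M) : f.liftOfSurjective hf g hg (f u) = g u :=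
  hg _ _ (Function.surjInv_eq hf _)

theorem MulHom.map_one_mul_and_mul_map_one {M N : Type} [MulOneClass M] [Mul N] {f : M →ₙ* N}
    (hf : Function.Surjective f) (t : N) : f 1 * t = t ∧ t * f 1 = t := by
  obtain ⟨x, rfl⟩ := hf t
  simp only [← map_mul, one_mul, mul_one, and_self]

section Sandwich

variable {M K : Type} [Mul M] [Semigroup K]

def MulHom.withOneSandwich (μ : M →ₙ* K) (γ : K) (hγ : ∀ p q : K, p * γ * q = p * q) :
    WithOne M →ₙ* K where
  toFun := WithOne.recOneCoe (γ * γ) fun x => γ * μ x * γ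
  map_mul' x y := by
    have hγ' : ∀ p q : K, p * (γ * q) = p * q := fun p q => by rw [← mul_assoc, hγ]
    induction x using WithOne.recOneCoe <;> induction y using WithOne.recOneCoe <;>
      simp only [one_mul, mul_one, ← WithOne.coe_mul, WithOne.recOneCoe_one,
        WithOne.recOneCoe_coe, map_mul, mul_assoc, hγ']

theorem MulHom.withOneSandwich_one (μ : M →ₙ* K) (γ : K) (hγ : ∀ p q : K, p * γ * q = p * q) :
    μ.withOneSandwich γ hγ 1 = γ * γ :=
  rfl

theorem MulHom.withOneSandwich_coe (μ : M →ₙ* K) (γ : K) (hγ : ∀ p q : K, p * γ * q = p * q)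
    (x : M) : μ.withOneSandwich γ hγ x = γ * μ x * γ :=
  rfl

end Sandwich

section Topology

variable {S T U : Type} [TopologicalSpace S]

theorem continuousDisc_iff {f : S → T} : ContinuousDisc f ↔ ∀ V : Set T, IsOpen (f ⁻¹' V) :=
  (@continuous_def S T _ ⊥ f).trans <|
    forall_congr' fun V => imp_iff_right (@isOpen_discrete T ⊥ (discreteTopology_bot T) V)

theorem ContinuousDisc.comp_left {f : S → T} (hf : ContinuousDisc f) (g : T → U) :
    ContinuousDisc (g ∘ f) :=
  continuousDisc_iff.mpr fun V => continuousDisc_iff.mp hf (g ⁻¹' V)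

theorem ContinuousDisc.srangeRestrict [Mul S] [Mul T] {f : S →ₙ* T} (hf : ContinuousDisc f) :
    ContinuousDisc f.srangeRestrict := by
  refine continuousDisc_iff.mpr fun V => ?_
  have hpre : f.srangeRestrict ⁻¹' V = f ⁻¹' (Subtype.val '' V) := by
    ext s
    simp only [Set.mem_preimage, ← MulHom.coe_srangeRestrict f s,
      Subtype.val_injective.mem_set_image]
  rw [hpre]
  exact continuousDisc_iff.mp hf _

theorem continuousDisc_withOneTopSgr_iff {X : TopSgr} {f : (withOneTopSgr X).carrier → T} :
    ContinuousDisc f ↔ ContinuousDisc (f ∘ ((↑) : X.carrier → WithOne X.carrier)) := by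
  simp only [continuousDisc_iff]
  rfl

end Topology

section CayleyGraph

variable {A B T T' : Type} [Semigroup T] [Semigroup T']

theorem letters_mul (u v : FreeSemigroup A) : letters (u * v) = letters u ++ letters v := rfl

theorem letters_of (a : A) : letters (of a) = [a] := rfl

theorem letters_map (m : A → B) (u : FreeSemigroup A) :
    letters (map m u) = (letters u).map m := by
  induction u using FreeSemigroup.recOnMul with
  | ih1 a => rfl
  | ih2 a u _ ih => rw [map_mul, letters_mul, letters_mul, ih, List.map_append]; rfl

theorem wordImg_nil (ψ : FreeSemigroup A →ₙ* T) : wordImg ψ [] = 1 := rfl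

theorem wordImg_singleton (ψ : FreeSemigroup A →ₙ* T) (a : A) :
    wordImg ψ [a] = letterImg ψ a := by
  simp [wordImg]

theorem wordImg_cons (ψ : FreeSemigroup A →ₙ* T) (a : A) (w : List A) :
    wordImg ψ (a :: w) = letterImg ψ a * wordImg ψ w := by
  simp [wordImg]

theorem wordImg_append (ψ : FreeSemigroup A →ₙ* T) (w₁ w₂ : List A) :
    wordImg ψ (w₁ ++ w₂) = wordImg ψ w₁ * wordImg ψ w₂ := by
  simp [wordImg]

theorem wordImg_letters (ψ : FreeSemigroup A →ₙ* T) (u : FreeSemigroup A) :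
    wordImg ψ (letters u) = ψ u := by
  induction u using FreeSemigroup.recOnMul with
  | ih1 a => simp [letters_of, wordImg, letterImg]
  | ih2 a u ha hu => rw [letters_mul, wordImg_append, ha, hu, map_mul, WithOne.coe_mul]

theorem wordImg_map {ψ : FreeSemigroup A →ₙ* T} {ψ' : FreeSemigroup B →ₙ* T'} {m : A → B}
    {j : T →ₙ* T'} (h : ψ'.comp (map m) = j.comp ψ) (w : List A) :
    wordImg ψ' (w.map m) = WithOne.mapMulHom j (wordImg ψ w) := by
  have hletter : ∀ a, letterImg ψ' (m a) = WithOne.mapMulHom j (letterImg ψ a) := fun a => by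
    simp only [letterImg, WithOne.mapMulHom_coe, ← map_of, ← MulHom.comp_apply, h]
  simp only [wordImg, map_list_prod, List.map_map]
  exact congrArg List.prod (List.map_congr_left fun a _ => hletter a)

def pathEdge (ψ : FreeSemigroup A →ₙ* T) (w₁ : List A) (a : A) (w₂ : List A) : KREdge A T :=
  ((wordImg ψ w₁, wordImg ψ (a :: w₂)), a, (wordImg ψ (w₁ ++ [a]), wordImg ψ w₂))

theorem mem_pathEdges {ψ : FreeSemigroup A →ₙ* T} {u : FreeSemigroup A} {e : KREdge A T} :
    e ∈ pathEdges ψ u ↔ ∃ w₁ w₂ a, letters u = w₁ ++ a :: w₂ ∧ e = pathEdge ψ w₁ a w₂ :=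
  Iff.rfl

theorem transEdges_eq_inter (ψ : FreeSemigroup A →ₙ* T) (u : FreeSemigroup A) :
    transEdges ψ u = pathEdges ψ u ∩ {e | IsTransEdge ψ e} :=
  rfl

theorem isKREdge_of_mem_pathEdges {ψ : FreeSemigroup A →ₙ* T} {u : FreeSemigroup A}
    {e : KREdge A T} (he : e ∈ pathEdges ψ u) : IsKREdge ψ e := by
  obtain ⟨w₁, w₂, a, -, rfl⟩ := he
  exact ⟨by rw [wordImg_append, wordImg_singleton], wordImg_cons ψ a w₂⟩

def mapEdge (F : KRVtx T → KRVtx T') (m : A → B) (e : KREdge A T) : KREdge B T' :=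
  (F e.1, m e.2.1, F e.2.2)

def vtxMulRight (t : T) (p : KRVtx T) : KRVtx T := (p.1, p.2 * t)

def vtxMulLeft (t : T) (p : KRVtx T) : KRVtx T := (t * p.1, p.2)

theorem KRStep.vtxMulRight {ψ : FreeSemigroup A →ₙ* T} (t : T) {p q : KRVtx T}
    (h : KRStep ψ p q) : KRStep ψ (vtxMulRight t p) (vtxMulRight t q) := by
  obtain ⟨a, h₁, h₂⟩ := h
  refine ⟨a, h₁, ?_⟩
  show p.2 * ↑t = letterImg ψ a * (q.2 * ↑t)
  rw [h₂, mul_assoc]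

theorem KRStep.vtxMulLeft {ψ : FreeSemigroup A →ₙ* T} (t : T) {p q : KRVtx T}
    (h : KRStep ψ p q) : KRStep ψ (vtxMulLeft t p) (vtxMulLeft t q) := by
  obtain ⟨a, h₁, h₂⟩ := h
  refine ⟨a, ?_, h₂⟩
  show ↑t * p.1 * letterImg ψ a = ↑t * q.1
  rw [mul_assoc, h₁]

theorem KRStep.map {ψ : FreeSemigroup A →ₙ* T} {ψ' : FreeSemigroup B →ₙ* T'} {m : A → B}
    {j : T →ₙ* T'} (h : ψ'.comp (map m) = j.comp ψ) {p q : KRVtx T} (hpq : KRStep ψ p q) :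
    KRStep ψ' (Prod.map (WithOne.mapMulHom j) (WithOne.mapMulHom j) p)
      (Prod.map (WithOne.mapMulHom j) (WithOne.mapMulHom j) q) := by
  obtain ⟨a, h₁, h₂⟩ := hpq
  have hletter := wordImg_map h [a]
  rw [List.map_singleton, wordImg_singleton, wordImg_singleton] at hletter
  refine ⟨m a, ?_, ?_⟩
  · show WithOne.mapMulHom j p.1 * _ = WithOne.mapMulHom j q.1
    rw [hletter, ← map_mul, h₁]
  · show WithOne.mapMulHom j p.2 = _ * WithOne.mapMulHom j q.2
    rw [hletter, ← map_mul, h₂]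

theorem not_isTransEdge_mapEdge {ψ : FreeSemigroup A →ₙ* T} {ψ' : FreeSemigroup B →ₙ* T'}
    {F : KRVtx T → KRVtx T'} (hF : ∀ p q, KRStep ψ p q → KRStep ψ' (F p) (F q)) (m : A → B)
    {e : KREdge A T} (he : IsKREdge ψ e) (hne : ¬ IsTransEdge ψ e) :
    ¬ IsTransEdge ψ' (mapEdge F m e) := by
  have hback : Relation.ReflTransGen (KRStep ψ) e.2.2 e.1 := by
    by_contra h
    exact hne ⟨he, h⟩
  exact fun ht => ht.2 (hback.lift F hF)

theorem image_pathEdges_inter_isTransEdge {ψ : FreeSemigroup A →ₙ* T}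
    {ψ' : FreeSemigroup B →ₙ* T'} {F : KRVtx T → KRVtx T'}
    (hF : ∀ p q, KRStep ψ p q → KRStep ψ' (F p) (F q)) (m : A → B) (u : FreeSemigroup A) :
    mapEdge F m '' pathEdges ψ u ∩ {e | IsTransEdge ψ' e} =
      mapEdge F m '' transEdges ψ u ∩ {e | IsTransEdge ψ' e} := by
  refine subset_antisymm ?_ (Set.inter_subset_inter_left _ (Set.image_mono (Set.sep_subset _ _)))
  rintro _ ⟨⟨e, he, rfl⟩, ht⟩
  refine ⟨⟨e, ⟨he, ?_⟩, rfl⟩, ht⟩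
  by_contra hne
  exact not_isTransEdge_mapEdge hF m (isKREdge_of_mem_pathEdges he) hne ht

theorem mapEdge_vtxMulRight_pathEdge (ψ : FreeSemigroup A →ₙ* T) (v : FreeSemigroup A)
    (w₁ : List A) (a : A) (w₂ : List A) :
    mapEdge (vtxMulRight (ψ v)) id (pathEdge ψ w₁ a w₂) = pathEdge ψ w₁ a (w₂ ++ letters v) := by
  simp [mapEdge, vtxMulRight, pathEdge, wordImg_cons, wordImg_append, wordImg_letters, mul_assoc]

theorem mapEdge_vtxMulLeft_pathEdge (ψ : FreeSemigroup A →ₙ* T) (u : FreeSemigroup A)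
    (w₁ : List A) (a : A) (w₂ : List A) :
    mapEdge (vtxMulLeft (ψ u)) id (pathEdge ψ w₁ a w₂) = pathEdge ψ (letters u ++ w₁) a w₂ := by
  simp [mapEdge, vtxMulLeft, pathEdge, wordImg_append, wordImg_letters]

theorem mapEdge_map_pathEdge {ψ : FreeSemigroup A →ₙ* T} {ψ' : FreeSemigroup B →ₙ* T'}
    {m : A → B} {j : T →ₙ* T'} (h : ψ'.comp (map m) = j.comp ψ) (w₁ : List A) (a : A)
    (w₂ : List A) :
    mapEdge (Prod.map (WithOne.mapMulHom j) (WithOne.mapMulHom j)) m (pathEdge ψ w₁ a w₂) =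
      pathEdge ψ' (w₁.map m) (m a) (w₂.map m) := by
  simp only [mapEdge, pathEdge, Prod.map, ← wordImg_map h, List.map_append, List.map_cons,
    List.map_nil]

theorem pathEdges_mul (ψ : FreeSemigroup A →ₙ* T) (u v : FreeSemigroup A) :
    pathEdges ψ (u * v) = mapEdge (vtxMulRight (ψ v)) id '' pathEdges ψ u ∪
      mapEdge (vtxMulLeft (ψ u)) id '' pathEdges ψ v := by
  ext e
  simp only [Set.mem_union, Set.mem_image, mem_pathEdges, letters_mul]
  constructor
  · rintro ⟨w₁, w₂, a, hw, rfl⟩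
    rcases List.append_eq_append_cons_iff.mp hw with ⟨k, hu, rfl⟩ | ⟨k, rfl, hv⟩
    · exact Or.inl ⟨_, ⟨w₁, k, a, hu, rfl⟩, mapEdge_vtxMulRight_pathEdge ψ v w₁ a k⟩
    · exact Or.inr ⟨_, ⟨k, w₂, a, hv, rfl⟩, mapEdge_vtxMulLeft_pathEdge ψ u k a w₂⟩
  · rintro (⟨_, ⟨w₁, w₂, a, hu, rfl⟩, rfl⟩ | ⟨_, ⟨w₁, w₂, a, hv, rfl⟩, rfl⟩)
    · exact ⟨w₁, w₂ ++ letters v, a, by simp [hu], mapEdge_vtxMulRight_pathEdge ψ v w₁ a w₂⟩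
    · exact ⟨letters u ++ w₁, w₂, a, by simp [hv], mapEdge_vtxMulLeft_pathEdge ψ u w₁ a w₂⟩

theorem pathEdges_of (ψ : FreeSemigroup A →ₙ* T) (a : A) :
    pathEdges ψ (of a) = {pathEdge ψ [] a []} := by
  ext e
  simp only [mem_pathEdges, letters_of, Set.mem_singleton_iff]
  constructor
  · rintro ⟨w₁, w₂, b, hw, rfl⟩
    obtain ⟨rfl, rfl, rfl⟩ : w₁ = [] ∧ b = a ∧ w₂ = [] := by
      rcases w₁ with _ | ⟨c, w₁⟩ <;> simp_all
    rfl
  · rintro rfl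
    exact ⟨[], [], a, rfl, rfl⟩

theorem pathEdges_map {ψ : FreeSemigroup A →ₙ* T} {ψ' : FreeSemigroup B →ₙ* T'} {m : A → B}
    {j : T →ₙ* T'} (h : ψ'.comp (map m) = j.comp ψ) (u : FreeSemigroup A) :
    pathEdges ψ' (map m u) =
      mapEdge (Prod.map (WithOne.mapMulHom j) (WithOne.mapMulHom j)) m '' pathEdges ψ u := by
  ext e
  simp only [Set.mem_image, mem_pathEdges, letters_map]
  constructor
  · rintro ⟨w₁, w₂, b, hw, rfl⟩
    obtain ⟨l₁, l₂, hl, rfl, hl₂⟩ := List.map_eq_append_iff.mp hw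
    obtain ⟨a, l₂, rfl, rfl, rfl⟩ := List.map_eq_cons_iff.mp hl₂
    exact ⟨_, ⟨l₁, l₂, a, hl, rfl⟩, mapEdge_map_pathEdge h l₁ a l₂⟩
  · rintro ⟨_, ⟨w₁, w₂, a, hw, rfl⟩, rfl⟩
    exact ⟨w₁.map m, w₂.map m, m a, by simp [hw], mapEdge_map_pathEdge h w₁ a w₂⟩

theorem transEdges_mul (ψ : FreeSemigroup A →ₙ* T) (u v : FreeSemigroup A) :
    transEdges ψ (u * v) =
      (mapEdge (vtxMulRight (ψ v)) id '' transEdges ψ u ∪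
        mapEdge (vtxMulLeft (ψ u)) id '' transEdges ψ v) ∩ {e | IsTransEdge ψ e} := by
  rw [transEdges_eq_inter, pathEdges_mul, Set.union_inter_distrib_right,
    Set.union_inter_distrib_right,
    image_pathEdges_inter_isTransEdge (fun _ _ => KRStep.vtxMulRight (ψ v)),
    image_pathEdges_inter_isTransEdge (fun _ _ => KRStep.vtxMulLeft (ψ u))]

theorem transEdges_map {ψ : FreeSemigroup A →ₙ* T} {ψ' : FreeSemigroup B →ₙ* T'} {m : A → B}
    {j : T →ₙ* T'} (h : ψ'.comp (map m) = j.comp ψ) (u : FreeSemigroup A) :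
    transEdges ψ' (map m u) =
      mapEdge (Prod.map (WithOne.mapMulHom j) (WithOne.mapMulHom j)) m '' transEdges ψ u ∩
        {e | IsTransEdge ψ' e} := by
  rw [transEdges_eq_inter, pathEdges_map h,
    image_pathEdges_inter_isTransEdge (fun _ _ => KRStep.map h)]

/-- The letter `c` only adds a loop at the vertex `(ψ u, ψ v)`, which is no transition edge. -/
theorem transEdges_mul_of_mul {ψ : FreeSemigroup A →ₙ* T} {u v : FreeSemigroup A} {c : A}
    (hu : ψ u * ψ (of c) = ψ u) (hv : ψ (of c) * ψ v = ψ v) :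
    transEdges ψ (u * of c * v) = transEdges ψ (u * v) := by
  set loop : KREdge A T := ((ψ u, ψ v), c, (ψ u, ψ v))
  have hpath : pathEdges ψ (u * of c * v) = pathEdges ψ (u * v) ∪ {loop} := by
    have hloop : mapEdge (vtxMulRight (ψ v)) id (mapEdge (vtxMulLeft (ψ u)) id
        (pathEdge ψ [] c [])) = loop := by
      simp [mapEdge, vtxMulRight, vtxMulLeft, pathEdge, wordImg_nil, wordImg_cons, letterImg,
        ← WithOne.coe_mul, hu, hv, loop]
    have hcomp : mapEdge (vtxMulRight (ψ v)) id ∘ mapEdge (vtxMulRight (ψ (of c))) id =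
        mapEdge (vtxMulRight (ψ v)) (id : A → A) := by
      funext e
      simp [mapEdge, vtxMulRight, ← WithOne.coe_mul, mul_assoc, hv]
    rw [pathEdges_mul, pathEdges_mul, pathEdges_of, pathEdges_mul, map_mul, hu, Set.image_union,
      ← Set.image_comp, hcomp, Set.image_singleton, Set.image_singleton, hloop,
      Set.union_right_comm]
  have hloop_not : ¬ IsTransEdge ψ loop := fun h => h.2 Relation.ReflTransGen.refl
  rw [transEdges_eq_inter, transEdges_eq_inter, hpath, Set.union_inter_distrib_right,
    (Set.singleton_inter_eq_empty (s := {e | IsTransEdge ψ e})).mpr hloop_not, Set.union_empty]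

end CayleyGraph

section KRExpansion

variable {A B T T' : Type} [Semigroup T] [Semigroup T']

/-- The congruence `≡_ψ` of the Karnofsky–Rhodes expansion. -/
def krCon (ψ : FreeSemigroup A →ₙ* T) : Con (FreeSemigroup A) where
  r u v := ψ u = ψ v ∧ transEdges ψ u = transEdges ψ v
  iseqv := ⟨fun _ => ⟨rfl, rfl⟩, fun h => ⟨h.1.symm, h.2.symm⟩,
    fun h h' => ⟨h.1.trans h'.1, h.2.trans h'.2⟩⟩
  mul' h h' := ⟨by rw [map_mul, map_mul, h.1, h'.1], by
    rw [transEdges_mul, transEdges_mul, h.1, h.2, h'.1, h'.2]⟩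

theorem krCon_mk_eq_mk_iff {ψ : FreeSemigroup A →ₙ* T} {u v : FreeSemigroup A} :
    (u : (krCon ψ).Quotient) = v ↔ ψ u = ψ v ∧ transEdges ψ u = transEdges ψ v :=
  Con.eq _

instance [Finite A] [Finite T] (ψ : FreeSemigroup A →ₙ* T) : Finite (krCon ψ).Quotient :=
  Finite.of_injective (fun x => x.liftOn (fun u => (ψ u, transEdges ψ u))
      fun _ _ h => Prod.ext h.1 h.2)
    fun x y => Con.induction_on₂ x y fun _ _ h => krCon_mk_eq_mk_iff.mpr (Prod.ext_iff.mp h)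

noncomputable def krExp [Finite A] [Finite T] (ψ : FreeSemigroup A →ₙ* T) : KRExp ψ where
  K := (krCon ψ).Quotient
  ψKR := (krCon ψ).mkMulHom
  π := (krCon ψ).mkMulHom.liftOfSurjective Quotient.mk_surjective ψ
    fun _ _ h => (krCon_mk_eq_mk_iff.mp h).1
  surj := Quotient.mk_surjective
  ker _ _ := krCon_mk_eq_mk_iff
  proj := MulHom.ext fun u =>
    MulHom.liftOfSurjective_apply (hg := fun _ _ h => (krCon_mk_eq_mk_iff.mp h).1) u

namespace KRExp

theorem π_ψKR {ψ : FreeSemigroup A →ₙ* T} (E : KRExp ψ) (u : FreeSemigroup A) :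
    E.π (E.ψKR u) = ψ u :=
  DFunLike.congr_fun E.proj u

noncomputable def map {ψ : FreeSemigroup A →ₙ* T} {ψ' : FreeSemigroup B →ₙ* T'} {m : A → B}
    {j : T →ₙ* T'} (h : ψ'.comp (FreeSemigroup.map m) = j.comp ψ) (E : KRExp ψ)
    (E' : KRExp ψ') : E.K →ₙ* E'.K :=
  E.ψKR.liftOfSurjective E.surj (E'.ψKR.comp (FreeSemigroup.map m)) fun u v huv => by
    obtain ⟨hψ, htrans⟩ := (E.ker u v).mp huv
    refine (E'.ker _ _).mpr ⟨?_, ?_⟩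
    · exact (DFunLike.congr_fun h u).trans ((congrArg j hψ).trans (DFunLike.congr_fun h v).symm)
    · rw [transEdges_map h, transEdges_map h, htrans]

theorem map_ψKR {ψ : FreeSemigroup A →ₙ* T} {ψ' : FreeSemigroup B →ₙ* T'} {m : A → B}
    {j : T →ₙ* T'} (h : ψ'.comp (FreeSemigroup.map m) = j.comp ψ) (E : KRExp ψ)
    (E' : KRExp ψ') (u : FreeSemigroup A) :
    map h E E' (E.ψKR u) = E'.ψKR (FreeSemigroup.map m u) :=
  MulHom.liftOfSurjective_apply u

theorem π_map {ψ : FreeSemigroup A →ₙ* T} {ψ' : FreeSemigroup B →ₙ* T'} {m : A → B}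
    {j : T →ₙ* T'} (h : ψ'.comp (FreeSemigroup.map m) = j.comp ψ) (E : KRExp ψ)
    (E' : KRExp ψ') (x : E.K) : E'.π (map h E E' x) = j (E.π x) := by
  obtain ⟨u, rfl⟩ := E.surj x
  rw [map_ψKR, π_ψKR, π_ψKR, ← MulHom.comp_apply, h, MulHom.comp_apply]

theorem mul_ψKR_of_mul {ψ : FreeSemigroup A →ₙ* T} (E : KRExp ψ) {c : A}
    (hc : ∀ t, ψ (of c) * t = t ∧ t * ψ (of c) = t) (p q : E.K) :
    p * E.ψKR (of c) * q = p * q := by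
  obtain ⟨u, rfl⟩ := E.surj p
  obtain ⟨v, rfl⟩ := E.surj q
  rw [← map_mul, ← map_mul, ← map_mul]
  exact (E.ker _ _).mpr ⟨by rw [map_mul, map_mul, map_mul, (hc _).2],
    transEdges_mul_of_mul ((hc _).2) ((hc _).1)⟩

end KRExp

end KRExpansion

theorem KRData.exists_withOne_hom {T : Type} [Semigroup T] [Finite T] {T₀ : Subsemigroup T}
    {e : T} (he : ∀ t, e * t = t ∧ t * e = t) (hT : ∀ t, t = e ∨ t ∈ T₀) (D₀ : KRData T₀) :
    ∃ (D : KRData T) (Θ : WithOne D₀.E.K →ₙ* D.E.K),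
      D.E.π (Θ 1) = e ∧ ∀ x : D₀.E.K, D.E.π (Θ x) = D₀.E.π x := by
  let ψ : FreeSemigroup (D₀.A ⊕ Unit) →ₙ* T :=
    FreeSemigroup.lift (Sum.elim (fun a => (D₀.ψ (of a) : T)) fun _ => e)
  have hψ : ψ.comp (map Sum.inl) = (MulMemClass.subtype T₀).comp D₀.ψ :=
    hom_ext (funext fun a => by simp [ψ])
  have hψe : ψ (of (Sum.inr ())) = e := lift_of _ _
  have hψs : Function.Surjective ψ := by
    intro t
    rcases hT t with rfl | ht
    · exact ⟨_, hψe⟩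
    · obtain ⟨u, hu⟩ := D₀.surjψ ⟨t, ht⟩
      exact ⟨map Sum.inl u, (DFunLike.congr_fun hψ u).trans (congrArg Subtype.val hu)⟩
  let E := krExp ψ
  let γ := E.ψKR (of (Sum.inr ()))
  have hγ : ∀ p q, p * γ * q = p * q := E.mul_ψKR_of_mul (hψe ▸ he)
  refine ⟨⟨D₀.A ⊕ Unit, ψ, hψs, E⟩, (KRExp.map hψ D₀.E E).withOneSandwich γ hγ, ?_, fun x => ?_⟩
  · rw [MulHom.withOneSandwich_one, map_mul, E.π_ψKR, hψe, (he e).1]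
  · rw [MulHom.withOneSandwich_coe, map_mul, map_mul, KRExp.π_map, E.π_ψKR, hψe, (he _).1,
      (he _).2]
    rfl

theorem withOne_isKRCover_general (S : TopSgr)
    (hKR : IsKRCover S) :
    IsKRCover (withOneTopSgr S) := by
  intro T _ _ hφex
  refine ⟨hφex, fun (φ : WithOne S.carrier →ₙ* T) hφ hφs => ?_⟩
  set φS : S.carrier →ₙ* T := φ.comp WithOne.coeMulHom
  have hφS : ContinuousDisc φS.srangeRestrict :=
    (continuousDisc_withOneTopSgr_iff.mp hφ).srangeRestrict
  obtain ⟨D₀, lift₀, hlift₀, hπlift₀⟩ :=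
    (hKR _ ⟨_, hφS, φS.srangeRestrict_surjective⟩).2 _ hφS φS.srangeRestrict_surjective
  have hT : ∀ t, t = φ 1 ∨ t ∈ φS.srange := by
    intro t
    obtain ⟨x, rfl⟩ := hφs t
    induction x using WithOne.recOneCoe with
    | one => exact Or.inl rfl
    | coe s => exact Or.inr ⟨s, rfl⟩
  obtain ⟨D, Θ, hΘ_one, hΘ_coe⟩ := D₀.exists_withOne_hom
    (MulHom.map_one_mul_and_mul_map_one (M := WithOne S.carrier) hφs) hT
  refine ⟨D, Θ.comp (WithOne.mapMulHom lift₀).toMulHom,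
    continuousDisc_withOneTopSgr_iff.mpr (hlift₀.comp_left fun y => Θ y), MulHom.ext fun x => ?_⟩
  induction x using WithOne.recOneCoe with
  | one => exact hΘ_one
  | coe s =>
    show D.E.π (Θ (lift₀ s)) = φ s
    rw [hΘ_coe, ← MulHom.comp_apply D₀.E.π, hπlift₀]
    rfl

/-- Adjoining an isolated identity to a profinite KR-cover yields a
KR-cover. -/
theorem withOne_isKRCover (S : TopSgr) (hpro : IsProfiniteSgr S)
    (hKR : IsKRCover S) :
    IsKRCover (withOneTopSgr S) :=
  withOne_isKRCover_general S hKR
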